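/- Let f : ℝ^N → ℝ^N, h : ℝ^N → ℝ^M, K : ℝ^M → ℝ^N be C¹ maps with f(0)=0, h(0)=0, K(0)=0, and suppose there exist constants 0 < a ≤ b such that a·I_N ≤ Df(x)ᵀDf(x) ≤ b·I_N for all x ∈ ℝ^N. Fix 0 < p < 1 and set 𝒜(x,ξ) := Df(x) − ξ·D(K∘h)(x) for ξ ∈ {0,1}. Suppose the linearized error dynamics η_{t+1} = 𝒜(x_t, ξ_t) η_t along x_{t+1} = f(x_t) is MSE stable: there exist L < ∞, 0 < β < 1 with E_{ξ_0^t}[‖η_{t+1}‖²] ≤ L β^t ‖η_0‖² for all x_0, η_0 ∈ ℝ^N and t ≥ 0. Then there exist constants 0 < γ_1 ≤ γ_2 and a map P : ℝ^N → Sym(N,ℝ) such that γ_1·I_N ≤ P(x) ≤ γ_2·I_N for all x, and for all x ∈ ℝ^N: p·𝒜(x,1)ᵀ P(f(x)) 𝒜(x,1) + (1−p)·𝒜(x,0)ᵀ P(f(x)) 𝒜(x,0) < P(x) in the Loewner order. -/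

import Mathlib

open Matrix

noncomputable section

abbrev Euc (n : ℕ) := EuclideanSpace ℝ (Fin n)

/-- Expectation over i.i.d. Bernoulli(p) erasure prefixes (ξ_0,…,ξ_t). -/
def erasureExp (p : ℝ) (t : ℕ) (G : (ℕ → Bool) → ℝ) : ℝ :=
  ∑ s : Fin (t + 1) → Bool,
    (∏ i, if s i then p else 1 - p) *
      G (fun n => if h : n < t + 1 then s ⟨n, h⟩ else false)

/-- Jacobian matrix of a map between Euclidean spaces, in the standard bases. -/
def jac {ι κ : Type*} [Fintype ι] [Fintype κ] [DecidableEq ι] [DecidableEq κ]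
    (f : EuclideanSpace ℝ ι → EuclideanSpace ℝ κ) (x : EuclideanSpace ℝ ι) :
    Matrix κ ι ℝ :=
  LinearMap.toMatrix (EuclideanSpace.basisFun ι ℝ).toBasis
    (EuclideanSpace.basisFun κ ℝ).toBasis (fderiv ℝ f x : _ →ₗ[ℝ] _)

variable {N M : ℕ}

/-- `𝒜(x, ξ) := Df(x) − ξ·D(K∘h)(x)`. -/
def calA (f : Euc N → Euc N) (h : Euc N → Euc M) (K : Euc M → Euc N)
    (x : Euc N) (ξ : Bool) : Matrix (Fin N) (Fin N) ℝ :=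
  jac f x - (if ξ then (1 : ℝ) else 0) • jac (K ∘ h) x

/-- Linearized error dynamics `η_{t+1} = 𝒜(x_t, ξ_t) η_t` along `x_{t+1} = f(x_t)`. -/
def etaSeqA (f : Euc N → Euc N) (h : Euc N → Euc M) (K : Euc M → Euc N)
    (x0 η0 : Euc N) (ξ : ℕ → Bool) : ℕ → Euc N
  | 0 => η0
  | t + 1 => toEuclideanLin (calA f h K (f^[t] x0) (ξ t)) (etaSeqA f h K x0 η0 ξ t)

/-! Let `Φ_t(x, ξ)` be the product of the matrices `𝒜` along the first `t` steps of the trajectory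
of `x`. The expected Gramians `S_t(x) = E[Φ_tᵀ Φ_t]` satisfy `S_0 = I` and
`S_{t+1}(x) = p 𝒜(x,1)ᵀ S_t(f x) 𝒜(x,1) + (1 - p) 𝒜(x,0)ᵀ S_t(f x) 𝒜(x,0)`, and MSE stability says
exactly that `0 ≤ S_{t+1}(x) ≤ L βᵗ I`. Hence `P = ∑ₜ S_t` converges with
`I ≤ P ≤ (1 + L / (1 - β)) I`, and summing the recursion gives
`P(x) - E_ξ[𝒜(x,ξ)ᵀ P(f x) 𝒜(x,ξ)] = S_0 = I`. -/

section LoewnerSums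

variable {n : Type*} [Fintype n]

theorem Matrix.IsHermitian.apply_eq_polarization [DecidableEq n] {S : Matrix n n ℝ}
    (hS : S.IsHermitian) (i j : n) :
    S i j = ((Pi.single i 1 + Pi.single j 1) ⬝ᵥ S *ᵥ (Pi.single i 1 + Pi.single j 1)
      - Pi.single i 1 ⬝ᵥ S *ᵥ Pi.single i 1 - Pi.single j 1 ⬝ᵥ S *ᵥ Pi.single j 1) / 2 := by
  have hji : S j i = S i j := by simpa using hS.apply i j
  simp only [mulVec_add, mulVec_single, MulOpposite.op_one, one_smul, dotProduct_add,
    add_dotProduct, single_dotProduct, col_apply, one_mul, hji]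
  ring

theorem Matrix.summable_of_summable_dotProduct_mulVec [DecidableEq n] {ι : Type*}
    {S : ι → Matrix n n ℝ}
    (hS : ∀ t, (S t).IsHermitian) (h : ∀ v, Summable fun t => v ⬝ᵥ S t *ᵥ v) :
    Summable S := by
  refine Pi.summable.2 fun i => Pi.summable.2 fun j => ?_
  simp only [fun t => (hS t).apply_eq_polarization i j]
  exact (((h _).sub (h _)).sub (h _)).div_const 2

theorem HasSum.dotProduct_mulVec {ι : Type*} {S : ι → Matrix n n ℝ} {P : Matrix n n ℝ}
    (hS : HasSum S P) (v w : n → ℝ) : HasSum (fun t => v ⬝ᵥ S t *ᵥ w) (v ⬝ᵥ P *ᵥ w) :=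
  hS.map (AddMonoidHom.mk' (fun M => v ⬝ᵥ M *ᵥ w) fun _ _ => by
    simp [add_mulVec, dotProduct_add]) (continuous_const.dotProduct
      (continuous_id.matrix_mulVec continuous_const))

theorem Matrix.PosSemidef.of_hasSum {ι : Type*} {S : ι → Matrix n n ℝ} {P : Matrix n n ℝ}
    (hS : HasSum S P) (hpos : ∀ t, (S t).PosSemidef) : P.PosSemidef := by
  refine .of_dotProduct_mulVec_nonneg ?_ fun v => ?_
  · refine hS.matrix_conjTranspose.unique ?_
    simpa only [fun t => (hpos t).isHermitian.eq] using hS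
  · exact (hS.dotProduct_mulVec (star v) v).nonneg fun t => (hpos t).dotProduct_mulVec_nonneg v

theorem Matrix.posSemidef_smul_one_sub_iff [DecidableEq n] {S : Matrix n n ℝ}
    (hS : S.IsHermitian) (c : ℝ) :
    (c • 1 - S).PosSemidef ↔ ∀ v, v ⬝ᵥ S *ᵥ v ≤ c * (v ⬝ᵥ v) := by
  have hherm : (c • 1 - S).IsHermitian := (isHermitian_one.smul (.all c)).sub hS
  rw [posSemidef_iff_dotProduct_mulVec, and_iff_right hherm]
  simp [sub_mulVec, smul_mulVec]

variable [DecidableEq n] {S : ℕ → Matrix n n ℝ} {c β : ℝ}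

theorem Matrix.summable_of_posSemidef_of_le_geometric (hβ0 : 0 ≤ β) (hβ1 : β < 1)
    (hS : ∀ t, (S t).PosSemidef) (hle : ∀ t, ((c * β ^ t) • 1 - S t).PosSemidef) :
    Summable S := by
  refine summable_of_summable_dotProduct_mulVec (fun t => (hS t).isHermitian) fun v => ?_
  refine .of_nonneg_of_le (fun t => by simpa using (hS t).dotProduct_mulVec_nonneg v)
    (fun t => ((posSemidef_smul_one_sub_iff (hS t).isHermitian _).1 (hle t)) v) ?_
  exact ((summable_geometric_of_lt_one hβ0 hβ1).mul_left c).mul_right _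

theorem Matrix.posSemidef_smul_one_sub_tsum_of_le_geometric (hβ0 : 0 ≤ β) (hβ1 : β < 1)
    (hS : ∀ t, (S t).PosSemidef) (hle : ∀ t, ((c * β ^ t) • 1 - S t).PosSemidef) :
    ((c / (1 - β)) • 1 - ∑' t, S t).PosSemidef := by
  refine .of_hasSum (.sub ?_ (summable_of_posSemidef_of_le_geometric hβ0 hβ1 hS hle).hasSum) hle
  simpa [div_eq_mul_inv] using
    ((hasSum_geometric_of_lt_one hβ0 hβ1).mul_left c).smul_const (1 : Matrix n n ℝ)

end LoewnerSums

section ErasureGramian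

variable {X n : Type*} [Fintype n]
  (f : X → X) (A : X → Bool → Matrix n n ℝ) (p : ℝ)

def erasureConj (Q : X → Matrix n n ℝ) (x : X) : Matrix n n ℝ :=
  p • ((A x true)ᵀ * Q (f x) * A x true) + (1 - p) • ((A x false)ᵀ * Q (f x) * A x false)

/-- `erasureGram f A p t x = E[Φᵀ Φ]` for the product `Φ` of the matrices `A` along the first `t`
steps from `x`, the erasures being i.i.d. Bernoulli(`p`) (see `erasureMean_norm_etaSeqA_sq`). -/
def erasureGram [DecidableEq n] : ℕ → X → Matrix n n ℝ
  | 0 => 1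
  | t + 1 => erasureConj f A p (erasureGram t)

variable {f A p}

theorem dotProduct_erasureConj_mulVec (Q : X → Matrix n n ℝ) (x : X) (v : n → ℝ) :
    v ⬝ᵥ erasureConj f A p Q x *ᵥ v =
      p * ((A x true *ᵥ v) ⬝ᵥ Q (f x) *ᵥ (A x true *ᵥ v)) +
        (1 - p) * ((A x false *ᵥ v) ⬝ᵥ Q (f x) *ᵥ (A x false *ᵥ v)) := by
  simp [erasureConj, add_mulVec, smul_mulVec, ← mulVec_mulVec, dotProduct_mulVec (v := v),
    vecMul_transpose]

theorem erasureConj_posSemidef (hp0 : 0 ≤ p) (hp1 : p ≤ 1) {Q : X → Matrix n n ℝ} {x : X}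
    (hQ : (Q (f x)).PosSemidef) : (erasureConj f A p Q x).PosSemidef := by
  simp only [erasureConj, ← conjTranspose_eq_transpose_of_trivial]
  exact ((hQ.conjTranspose_mul_mul_same _).smul hp0).add
    ((hQ.conjTranspose_mul_mul_same _).smul (sub_nonneg.2 hp1))

theorem erasureGram_posSemidef [DecidableEq n] (hp0 : 0 ≤ p) (hp1 : p ≤ 1) (t : ℕ) (x : X) :
    (erasureGram f A p t x).PosSemidef := by
  induction t generalizing x with
  | zero => exact .one
  | succ t ih => exact erasureConj_posSemidef hp0 hp1 (ih _)

theorem HasSum.erasureConj {S : ℕ → X → Matrix n n ℝ} {Q : X → Matrix n n ℝ} {x : X}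
    (h : HasSum (fun t => S t (f x)) (Q (f x))) :
    HasSum (fun t => erasureConj f A p (S t) x) (erasureConj f A p Q x) :=
  (((h.mul_left _).mul_right _).const_smul p).add
    (((h.mul_left _).mul_right _).const_smul (1 - p))

theorem tsum_erasureGram_sub_erasureConj [DecidableEq n]
    (hsum : ∀ x, Summable fun t => erasureGram f A p t x) (x : X) :
    (∑' t, erasureGram f A p t x) - erasureConj f A p (fun y => ∑' t, erasureGram f A p t y) x
      = 1 := by
  have htail : HasSum (fun t => erasureGram f A p (t + 1) x)
      (erasureConj f A p (fun y => ∑' t, erasureGram f A p t y) x) :=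
    (hsum (f x)).hasSum.erasureConj
  have hfull : HasSum (fun t => erasureGram f A p t x)
      (erasureConj f A p (fun y => ∑' t, erasureGram f A p t y) x + 1) := by
    simpa [erasureGram] using (hasSum_nat_add_iff (f := fun t => erasureGram f A p t x) 1).1 htail
  rw [hfull.tsum_eq, add_sub_cancel_left]

end ErasureGramian

section ErasureMean

def extendFalse {t : ℕ} (s : Fin t → Bool) : ℕ → Bool :=
  fun n => if h : n < t then s ⟨n, h⟩ else false

theorem extendFalse_cons {t : ℕ} (b : Bool) (s : Fin t → Bool) :
    extendFalse (Fin.cons b s : Fin (t + 1) → Bool) = Stream'.cons b (extendFalse s) := by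
  funext n
  cases n with
  | zero => rfl
  | succ n => simp only [extendFalse, Stream'.cons, Nat.add_lt_add_iff_right]; split_ifs <;> rfl

def erasureMean (p : ℝ) (t : ℕ) (G : (ℕ → Bool) → ℝ) : ℝ :=
  ∑ s : Fin t → Bool, (∏ i, if s i then p else 1 - p) * G (extendFalse s)

theorem erasureExp_eq_erasureMean (p : ℝ) (t : ℕ) (G : (ℕ → Bool) → ℝ) :
    erasureExp p t G = erasureMean p (t + 1) G :=
  rfl

theorem erasureMean_zero (p : ℝ) (G : (ℕ → Bool) → ℝ) :
    erasureMean p 0 G = G fun _ => false := by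
  simp only [erasureMean, Finset.univ_unique, Finset.univ_eq_empty, Finset.prod_empty, one_mul,
    Finset.sum_singleton]
  rfl

theorem erasureMean_succ (p : ℝ) (t : ℕ) (G : (ℕ → Bool) → ℝ) :
    erasureMean p (t + 1) G =
      p * erasureMean p t (fun ξ => G (Stream'.cons true ξ)) +
        (1 - p) * erasureMean p t (fun ξ => G (Stream'.cons false ξ)) := by
  rw [erasureMean, ← (Fin.consEquiv fun _ => Bool).sum_comp, Fintype.sum_prod_type,
    Fintype.sum_bool]
  simp [Fin.consEquiv, extendFalse_cons, Fin.prod_univ_succ, erasureMean, Finset.mul_sum,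
    mul_assoc]

end ErasureMean

section LinearizedErasureDynamics

theorem EuclideanSpace.norm_toLp_sq {n : Type*} [Fintype n] (v : n → ℝ) :
    ‖WithLp.toLp 2 v‖ ^ 2 = v ⬝ᵥ v := by
  rw [EuclideanSpace.real_norm_sq_eq]
  simp [dotProduct, sq]

variable (f : Euc N → Euc N) (h : Euc N → Euc M) (K : Euc M → Euc N)

theorem etaSeqA_cons_succ (x0 η0 : Euc N) (b : Bool) (ξ : ℕ → Bool) (t : ℕ) :
    etaSeqA f h K x0 η0 (Stream'.cons b ξ) (t + 1) =
      etaSeqA f h K (f x0) (toEuclideanLin (calA f h K x0 b) η0) ξ t := by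
  induction t with
  | zero => rfl
  | succ t ih =>
    show toEuclideanLin _ (etaSeqA f h K x0 η0 (Stream'.cons b ξ) (t + 1)) = _
    rw [ih]
    rfl

theorem erasureMean_norm_etaSeqA_sq (p : ℝ) (t : ℕ) (x : Euc N) (v : Fin N → ℝ) :
    erasureMean p t (fun ξ => ‖etaSeqA f h K x (WithLp.toLp 2 v) ξ t‖ ^ 2) =
      v ⬝ᵥ erasureGram f (calA f h K) p t x *ᵥ v := by
  induction t generalizing x v with
  | zero =>
    rw [erasureMean_zero, etaSeqA, EuclideanSpace.norm_toLp_sq, erasureGram, Pi.one_apply,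
      one_mulVec]
  | succ t ih =>
    simp only [erasureMean_succ, etaSeqA_cons_succ, toLpLin_toLp, toLin'_apply, ih]
    rw [erasureGram, dotProduct_erasureConj_mulVec]

end LinearizedErasureDynamics

theorem exists_matrix_lyapunov_P_of_mse_stable_general
    (f : Euc N → Euc N) (h : Euc N → Euc M) (K : Euc M → Euc N)
    (p : ℝ) (hp0 : 0 < p) (hp1 : p < 1)
    (L β : ℝ) (hβ0 : 0 < β) (hβ1 : β < 1)
    (hMSE : ∀ (x0 η0 : Euc N) (t : ℕ),
      erasureExp p t (fun ξ => ‖etaSeqA f h K x0 η0 ξ (t + 1)‖ ^ 2) ≤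
        L * β ^ t * ‖η0‖ ^ 2) :
    ∃ (γ₁ γ₂ : ℝ) (P : Euc N → Matrix (Fin N) (Fin N) ℝ),
      0 < γ₁ ∧ γ₁ ≤ γ₂ ∧
      (∀ x : Euc N, (P x).IsSymm) ∧
      (∀ x : Euc N,
        (P x - γ₁ • (1 : Matrix (Fin N) (Fin N) ℝ)).PosSemidef ∧
        (γ₂ • (1 : Matrix (Fin N) (Fin N) ℝ) - P x).PosSemidef) ∧
      (∀ x : Euc N,
        (P x -
          (p • ((calA f h K x true)ᵀ * P (f x) * calA f h K x true) +
           (1 - p) • ((calA f h K x false)ᵀ * P (f x) * calA f h K x false))).PosDef) := by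
  set S := erasureGram f (calA f h K) p
  set C := max L 0
  have hS (t : ℕ) (x : Euc N) : (S t x).PosSemidef := erasureGram_posSemidef hp0.le hp1.le t x
  have hle (x : Euc N) (t : ℕ) : ((C * β ^ t) • 1 - S (t + 1) x).PosSemidef := by
    refine (posSemidef_smul_one_sub_iff (hS _ x).isHermitian _).2 fun v => ?_
    calc v ⬝ᵥ S (t + 1) x *ᵥ v
        = erasureExp p t (fun ξ => ‖etaSeqA f h K x (WithLp.toLp 2 v) ξ (t + 1)‖ ^ 2) :=
          (erasureMean_norm_etaSeqA_sq f h K p (t + 1) x v).symm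
      _ ≤ L * β ^ t * ‖WithLp.toLp 2 v‖ ^ 2 := hMSE x _ t
      _ ≤ C * β ^ t * ‖WithLp.toLp 2 v‖ ^ 2 := by gcongr; exact le_max_left L 0
      _ = C * β ^ t * (v ⬝ᵥ v) := by rw [EuclideanSpace.norm_toLp_sq]
  have htail (x : Euc N) : Summable fun t => S (t + 1) x :=
    summable_of_posSemidef_of_le_geometric hβ0.le hβ1 (fun t => hS _ x) (hle x)
  have hsum (x : Euc N) : Summable fun t => S t x := (summable_nat_add_iff 1).1 (htail x)
  have hsplit (x : Euc N) : ∑' t, S t x = 1 + ∑' t, S (t + 1) x := (hsum x).tsum_eq_zero_add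
  refine ⟨1, 1 + C / (1 - β), fun x => ∑' t, S t x, one_pos, ?_, fun x => ?_,
    fun x => ⟨?_, ?_⟩, fun x => ?_⟩
  · have : 0 ≤ C / (1 - β) := div_nonneg (le_max_right L 0) (sub_nonneg.2 hβ1.le)
    linarith
  · exact isHermitian_iff_isSymm.1 (PosSemidef.of_hasSum (hsum x).hasSum (hS · x)).isHermitian
  · dsimp only
    rw [hsplit, one_smul, add_sub_cancel_left]
    exact .of_hasSum (htail x).hasSum fun t => hS _ x
  · dsimp only
    rw [hsplit, add_smul, one_smul, add_sub_add_left_eq_sub]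
    exact posSemidef_smul_one_sub_tsum_of_le_geometric hβ0.le hβ1 (fun t => hS _ x) (hle x)
  · show (∑' t, S t x - erasureConj f (calA f h K) p (fun y => ∑' t, S t y) x).PosDef
    rw [tsum_erasureGram_sub_erasureConj hsum x]
    exact .one

/-- MSE stability of the linearized error dynamics implies the existence of a
uniformly bounded matrix Lyapunov function `P` with
`E_ξ[𝒜(x,ξ)ᵀ P(f(x)) 𝒜(x,ξ)] < P(x)` in the Loewner order. -/
theorem exists_matrix_lyapunov_P_of_mse_stable
    (f : Euc N → Euc N) (h : Euc N → Euc M) (K : Euc M → Euc N)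
    (hf : ContDiff ℝ 1 f) (hh : ContDiff ℝ 1 h) (hK : ContDiff ℝ 1 K)
    (hf0 : f 0 = 0) (hh0 : h 0 = 0) (hK0 : K 0 = 0)
    (a b : ℝ) (ha : 0 < a) (hab : a ≤ b)
    (hJac : ∀ x : Euc N,
      ((jac f x)ᵀ * jac f x - a • (1 : Matrix (Fin N) (Fin N) ℝ)).PosSemidef ∧
      (b • (1 : Matrix (Fin N) (Fin N) ℝ) - (jac f x)ᵀ * jac f x).PosSemidef)
    (p : ℝ) (hp0 : 0 < p) (hp1 : p < 1)
    (L β : ℝ) (hβ0 : 0 < β) (hβ1 : β < 1)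
    (hMSE : ∀ (x0 η0 : Euc N) (t : ℕ),
      erasureExp p t (fun ξ => ‖etaSeqA f h K x0 η0 ξ (t + 1)‖ ^ 2) ≤
        L * β ^ t * ‖η0‖ ^ 2) :
    ∃ (γ₁ γ₂ : ℝ) (P : Euc N → Matrix (Fin N) (Fin N) ℝ),
      0 < γ₁ ∧ γ₁ ≤ γ₂ ∧
      (∀ x : Euc N, (P x).IsSymm) ∧
      (∀ x : Euc N,
        (P x - γ₁ • (1 : Matrix (Fin N) (Fin N) ℝ)).PosSemidef ∧
        (γ₂ • (1 : Matrix (Fin N) (Fin N) ℝ) - P x).PosSemidef) ∧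
      (∀ x : Euc N,
        (P x -
          (p • ((calA f h K x true)ᵀ * P (f x) * calA f h K x true) +
           (1 - p) • ((calA f h K x false)ᵀ * P (f x) * calA f h K x false))).PosDef) :=
  exists_matrix_lyapunov_P_of_mse_stable_general f h K p hp0 hp1 L β hβ0 hβ1 hMSE
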